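/- Define R'_n := 2(1/ρ − 1/n) where ρ = ρ(1). Then for every x > 0, P(n R'_n > x) = P(ρ < 2n/(x+2)) → 4/(x+2)^2 as n → ∞. -/

import Mathlib

open MeasureTheory ProbabilityTheory

/-- Probability that one merging event turns the partition `p` (with `k` blocks) into `p'`:
two uniformly random distinct blocks of `p` are merged. -/
noncomputable def mergeProb (n k : ℕ) (p p' : Finset (Finset (Fin n))) : ℝ :=
  (Nat.card {q : Finset (Fin n) × Finset (Fin n) //
      q.1 ∈ p ∧ q.2 ∈ p ∧ q.1 ≠ q.2 ∧
      p' = insert (q.1 ∪ q.2) ((p.erase q.1).erase q.2)} : ℝ) / ((k : ℝ) * ((k : ℝ) - 1))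

/-- The partition chain of Kingman's `n`-coalescent: `P n` is a.s. the partition of
`{1, …, n}` into singletons, and `P (k-1)` arises from `P k` by merging two uniformly
random blocks, conditionally on the whole history. Partitions are modeled as finite sets
of blocks. -/
def IsKingmanPartition (n : ℕ) {Ω : Type*} [MeasurableSpace Ω] (μ : Measure Ω)
    (P : ℕ → Ω → Finset (Finset (Fin n))) : Prop :=
  (∀ k p, MeasurableSet {ω | P k ω = p}) ∧
  (∀ᵐ ω ∂μ, P n ω = Finset.univ.image (fun i : Fin n => {i})) ∧
  ∀ k, 2 ≤ k → k ≤ n → ∀ p : ℕ → Finset (Finset (Fin n)), ∀ p' : Finset (Finset (Fin n)),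
    (μ ({ω | ∀ j, k ≤ j → j ≤ n → P j ω = p j} ∩ {ω | P (k - 1) ω = p'})).toReal
      = (μ {ω | ∀ j, k ≤ j → j ≤ n → P j ω = p j}).toReal * mergeProb n k (p k) p'

/-- `rho n P i ω` is the level of the internal node of the external branch at leaf `i`:
the largest `k ≥ 1` such that `{i}` is not a block of `π_k`. -/
noncomputable def rho (n : ℕ) {Ω : Type*} (P : ℕ → Ω → Finset (Finset (Fin n)))
    (i : Fin n) (ω : Ω) : ℕ :=
  sSup {k | 1 ≤ k ∧ k ≤ n ∧ {i} ∉ P k ω}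

/-- `Xcount n P k ω = #{i : ρ(i) = k}`, the number of external branches whose internal
node is at level `k`. -/
noncomputable def Xcount (n : ℕ) {Ω : Type*} (P : ℕ → Ω → Finset (Finset (Fin n)))
    (k : ℕ) (ω : Ω) : ℕ :=
  (Finset.univ.filter (fun i : Fin n => rho n P i ω = k)).card

/-- The coalescent times of Kingman's `n`-coalescent: `T n = 0` a.s. and the rescaled
increments `C(k,2) (T_{k-1} − T_k)`, `2 ≤ k ≤ n`, are independent exponential random
variables with mean `1`. -/
def IsKingmanTimes (n : ℕ) {Ω : Type*} [MeasurableSpace Ω] (μ : Measure Ω)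
    (T : ℕ → Ω → ℝ) : Prop :=
  (∀ k, Measurable (T k)) ∧
  (∀ᵐ ω ∂μ, T n ω = 0) ∧
  iIndepFun
    (fun j : Fin (n - 1) => fun ω =>
      (((j : ℕ) + 2).choose 2 : ℝ) * (T ((j : ℕ) + 1) ω - T ((j : ℕ) + 2) ω)) μ ∧
  ∀ j : Fin (n - 1),
    μ.map (fun ω => (((j : ℕ) + 2).choose 2 : ℝ) * (T ((j : ℕ) + 1) ω - T ((j : ℕ) + 2) ω))
      = ProbabilityTheory.expMeasure 1

namespace KingmanAux

open Finset

open scoped Classical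

variable {n : ℕ}

def Good (n k : ℕ) (p : Finset (Finset (Fin n))) : Prop :=
  p.card = k ∧ (∀ b ∈ p, b.Nonempty) ∧ ∀ a ∈ p, ∀ b ∈ p, a ≠ b → Disjoint a b

def mrg (p : Finset (Finset (Fin n))) (q : Finset (Fin n) × Finset (Fin n)) :
    Finset (Finset (Fin n)) :=
  insert (q.1 ∪ q.2) ((p.erase q.1).erase q.2)

lemma union_not_mem {k : ℕ} {p : Finset (Finset (Fin n))} (hp : Good n k p)
    {a b : Finset (Fin n)} (h1 : a ∈ p) (_h2 : b ∈ p) :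
    a ∪ b ∉ (p.erase a).erase b := by
  intro h
  have hmem : a ∪ b ∈ p := mem_of_mem_erase (mem_of_mem_erase h)
  have hne2 : a ∪ b ≠ a := (Finset.mem_erase.1 (Finset.mem_erase.1 h).2).1
  have hd := hp.2.2 _ hmem _ h1 hne2
  obtain ⟨y, hy⟩ := hp.2.1 _ h1
  exact (Finset.disjoint_left.1 hd (Finset.mem_union_left _ hy)) hy

lemma good_mrg {k : ℕ} (hk : 2 ≤ k) {p : Finset (Finset (Fin n))} (hp : Good n k p)
    {q : Finset (Fin n) × Finset (Fin n)} (h1 : q.1 ∈ p) (h2 : q.2 ∈ p) (hne : q.1 ≠ q.2) :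
    Good n (k-1) (mrg p q) := by
  obtain ⟨hcard, hne', hdisj⟩ := hp
  have hnotmem := union_not_mem ⟨hcard, hne', hdisj⟩ h1 h2
  refine ⟨?_, ?_, ?_⟩
  · rw [mrg, Finset.card_insert_of_notMem hnotmem, Finset.card_erase_of_mem
      (Finset.mem_erase.2 ⟨fun h => hne h.symm, h2⟩), Finset.card_erase_of_mem h1, hcard]
    omega
  · intro b hb
    rcases Finset.mem_insert.1 hb with h | h
    · exact (hne' _ h1).mono (by subst h; exact Finset.subset_union_left)
    · exact hne' _ (mem_of_mem_erase (mem_of_mem_erase h))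
  · intro a ha b hb hab
    rcases Finset.mem_insert.1 ha with ha' | ha' <;> rcases Finset.mem_insert.1 hb with hb' | hb'
    · exact absurd (ha'.trans hb'.symm) hab
    · subst ha'
      have hbp : b ∈ p := mem_of_mem_erase (mem_of_mem_erase hb')
      have hb1 : b ≠ q.1 := (Finset.mem_erase.1 (Finset.mem_erase.1 hb').2).1
      have hb2 : b ≠ q.2 := (Finset.mem_erase.1 hb').1
      exact Finset.disjoint_union_left.2
        ⟨(hdisj _ h1 _ hbp (fun h => hb1 h.symm)).symm.symm ,
         (hdisj _ h2 _ hbp (fun h => hb2 h.symm)).symm.symm⟩ |>.symm |>.symm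
    · subst hb'
      have hap : a ∈ p := mem_of_mem_erase (mem_of_mem_erase ha')
      have ha1 : a ≠ q.1 := (Finset.mem_erase.1 (Finset.mem_erase.1 ha').2).1
      have ha2 : a ≠ q.2 := (Finset.mem_erase.1 ha').1
      exact Finset.disjoint_union_right.2 ⟨hdisj _ hap _ h1 ha1, hdisj _ hap _ h2 ha2⟩
    · exact hdisj _ (mem_of_mem_erase (mem_of_mem_erase ha'))
        _ (mem_of_mem_erase (mem_of_mem_erase hb')) hab

lemma mem_mrg_singleton_iff {k : ℕ} {p : Finset (Finset (Fin n))} (hp : Good n k p)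
    {i : Fin n} (hi : ({i} : Finset (Fin n)) ∈ p)
    {q : Finset (Fin n) × Finset (Fin n)} (h1 : q.1 ∈ p) (h2 : q.2 ∈ p) (hne : q.1 ≠ q.2) :
    (({i} : Finset (Fin n)) ∈ mrg p q) ↔ (q.1 ≠ {i} ∧ q.2 ≠ {i}) := by
  constructor
  · intro h
    rcases Finset.mem_insert.1 h with h | h
    · exfalso
      have hs1 : q.1 ⊆ {i} := h ▸ Finset.subset_union_left
      have hs2 : q.2 ⊆ {i} := h ▸ Finset.subset_union_right
      have e1 : q.1 = {i} := Finset.Subset.antisymm hs1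
        (Finset.singleton_subset_iff.2 (by
          obtain ⟨y, hy⟩ := hp.2.1 _ h1
          have := Finset.mem_singleton.1 (hs1 hy); subst this; exact hy))
      have e2 : q.2 = {i} := Finset.Subset.antisymm hs2
        (Finset.singleton_subset_iff.2 (by
          obtain ⟨y, hy⟩ := hp.2.1 _ h2
          have := Finset.mem_singleton.1 (hs2 hy); subst this; exact hy))
      exact hne (e1.trans e2.symm)
    · exact ⟨fun e => (Finset.mem_erase.1 (Finset.mem_erase.1 h).2).1 e.symm,
        fun e => (Finset.mem_erase.1 h).1 e.symm⟩
  · rintro ⟨hq1, hq2⟩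
    exact Finset.mem_insert.2 (Or.inr (Finset.mem_erase.2 ⟨fun e => hq2 e.symm,
      Finset.mem_erase.2 ⟨fun e => hq1 e.symm, hi⟩⟩))

lemma mergeProb_eq (n k : ℕ) (p p' : Finset (Finset (Fin n))) :
    mergeProb n k p p' = ((Finset.univ.filter (fun q : Finset (Fin n) × Finset (Fin n) =>
      q.1 ∈ p ∧ q.2 ∈ p ∧ q.1 ≠ q.2 ∧ p' = mrg p q)).card : ℝ) / ((k : ℝ) * ((k : ℝ) - 1)) := by
  rw [mergeProb]
  congr 2
  rw [Nat.card_eq_fintype_card]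
  convert Fintype.card_subtype _
  · rfl
  · exact Classical.decPred _

lemma count_keep {k : ℕ} (hk : 2 ≤ k) {p : Finset (Finset (Fin n))} (hp : Good n k p)
    {i : Fin n} (hi : ({i} : Finset (Fin n)) ∈ p) :
    (Finset.univ.filter (fun q : Finset (Fin n) × Finset (Fin n) =>
      q.1 ∈ p ∧ q.2 ∈ p ∧ q.1 ≠ q.2 ∧ ({i} : Finset (Fin n)) ∈ mrg p q)).card
    = (k-1)*(k-2) := by
  have hset : (Finset.univ.filter (fun q : Finset (Fin n) × Finset (Fin n) =>
      q.1 ∈ p ∧ q.2 ∈ p ∧ q.1 ≠ q.2 ∧ ({i} : Finset (Fin n)) ∈ mrg p q))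
      = (p.erase {i}).offDiag := by
    ext q
    simp only [Finset.mem_filter, Finset.mem_univ, true_and, Finset.mem_offDiag,
      Finset.mem_erase]
    constructor
    · rintro ⟨h1, h2, hne, hm⟩
      have := (mem_mrg_singleton_iff hp hi h1 h2 hne).1 hm
      exact ⟨⟨this.1, h1⟩, ⟨this.2, h2⟩, hne⟩
    · rintro ⟨⟨e1, h1⟩, ⟨e2, h2⟩, hne⟩
      exact ⟨h1, h2, hne, (mem_mrg_singleton_iff hp hi h1 h2 hne).2 ⟨e1, e2⟩⟩
  rw [hset, Finset.offDiag_card, Finset.card_erase_of_mem hi, hp.1]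
  obtain ⟨m, rfl⟩ : ∃ m, k = m + 2 := ⟨k - 2, by omega⟩
  have h1 : m + 2 - 1 = m + 1 := by omega
  have h2 : m + 2 - 2 = m := by omega
  rw [h1, h2]
  have : (m+1) * (m+1) = (m+1)*m + (m+1) := by ring
  omega

lemma count_fiber_sum (p : Finset (Finset (Fin n))) (S : Finset (Finset (Finset (Fin n)))) :
    ∑ p' ∈ S, (Finset.univ.filter (fun q : Finset (Fin n) × Finset (Fin n) =>
        q.1 ∈ p ∧ q.2 ∈ p ∧ q.1 ≠ q.2 ∧ p' = mrg p q)).card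
    = (Finset.univ.filter (fun q : Finset (Fin n) × Finset (Fin n) =>
        q.1 ∈ p ∧ q.2 ∈ p ∧ q.1 ≠ q.2 ∧ mrg p q ∈ S)).card := by
  rw [Finset.card_eq_sum_card_fiberwise (f := mrg p) (t := S)
    (fun q hq => (Finset.mem_filter.1 hq).2.2.2.2)]
  refine Finset.sum_congr rfl (fun p' hp' => ?_)
  congr 1
  ext q
  simp only [Finset.mem_filter, Finset.mem_univ, true_and]
  constructor
  · rintro ⟨h1, h2, hne, he⟩
    exact ⟨⟨h1, h2, hne, he ▸ hp'⟩, he.symm⟩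
  · rintro ⟨⟨h1, h2, hne, _⟩, he⟩
    exact ⟨h1, h2, hne, he.symm⟩

lemma sum_mergeProb_keep {k : ℕ} (hk : 2 ≤ k) {p : Finset (Finset (Fin n))}
    (hp : Good n k p) {i : Fin n} (hi : ({i} : Finset (Fin n)) ∈ p) :
    ∑ p' ∈ Finset.univ.filter (fun p' : Finset (Finset (Fin n)) => ({i} : Finset (Fin n)) ∈ p'),
      mergeProb n k p p' = ((k:ℝ)-2)/(k:ℝ) := by
  simp only [mergeProb_eq]
  rw [← Finset.sum_div, ← Nat.cast_sum, count_fiber_sum]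
  have : (Finset.univ.filter (fun q : Finset (Fin n) × Finset (Fin n) =>
      q.1 ∈ p ∧ q.2 ∈ p ∧ q.1 ≠ q.2 ∧
        mrg p q ∈ Finset.univ.filter (fun p' : Finset (Finset (Fin n)) =>
          ({i} : Finset (Fin n)) ∈ p')))
      = (Finset.univ.filter (fun q : Finset (Fin n) × Finset (Fin n) =>
          q.1 ∈ p ∧ q.2 ∈ p ∧ q.1 ≠ q.2 ∧ ({i} : Finset (Fin n)) ∈ mrg p q)) := by
    apply Finset.filter_congr
    intro q _
    simp
  rw [this, count_keep hk hp hi]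
  have hk0 : (k:ℝ) ≠ 0 := by positivity
  have hk1 : (k:ℝ) - 1 ≠ 0 := by
    have : (2:ℝ) ≤ (k:ℝ) := by exact_mod_cast hk
    linarith
  have hc1 : ((k-1 : ℕ) : ℝ) = (k:ℝ) - 1 := by
    have : 1 ≤ k := by omega
    push_cast [this]; ring
  have hc2 : ((k-2 : ℕ) : ℝ) = (k:ℝ) - 2 := by
    push_cast [hk]; ring
  push_cast
  rw [hc1, hc2]
  field_simp

lemma mergeProb_zero {k : ℕ} (hk : 2 ≤ k) {p p' : Finset (Finset (Fin n))}
    (hp : Good n k p) (hp' : ¬ Good n (k-1) p') :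
    mergeProb n k p p' = 0 := by
  rw [mergeProb_eq]
  have : (Finset.univ.filter (fun q : Finset (Fin n) × Finset (Fin n) =>
      q.1 ∈ p ∧ q.2 ∈ p ∧ q.1 ≠ q.2 ∧ p' = mrg p q)) = ∅ := by
    apply Finset.filter_false_of_mem
    rintro q _ ⟨h1, h2, hne, he⟩
    exact hp' (he ▸ good_mrg hk hp h1 h2 hne)
  rw [this]
  simp

-- measure part


variable {n : ℕ} {Ω : Type*} [MeasurableSpace Ω]

def histEvent (n : ℕ) (P : ℕ → Ω → Finset (Finset (Fin n))) (k : ℕ)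
    (p : ℕ → Finset (Finset (Fin n))) : Set Ω :=
  {ω | ∀ j, k ≤ j → j ≤ n → P j ω = p j}

def Aset (n : ℕ) (P : ℕ → Ω → Finset (Finset (Fin n))) (i : Fin n) (k : ℕ) : Set Ω :=
  {ω | ∀ j, k ≤ j → j ≤ n → ({i} : Finset (Fin n)) ∈ P j ω}

def tup (n : ℕ) (v : Fin (n+1) → Finset (Finset (Fin n))) : ℕ → Finset (Finset (Fin n)) :=
  fun j => if h : j ≤ n then v ⟨j, Nat.lt_succ_of_le h⟩ else ∅

lemma tup_eq (v : Fin (n+1) → Finset (Finset (Fin n))) {j : ℕ} (h : j ≤ n) :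
    tup n v j = v ⟨j, Nat.lt_succ_of_le h⟩ := dif_pos h

def V (n k : ℕ) : Finset (Fin (n+1) → Finset (Finset (Fin n))) :=
  Finset.univ.filter (fun v => ∀ j : Fin (n+1), (j:ℕ) < k → v j = ∅)

variable {P : ℕ → Ω → Finset (Finset (Fin n))}

lemma measurable_histEvent (hm : ∀ k p, MeasurableSet {ω | P k ω = p}) (k : ℕ)
    (p : ℕ → Finset (Finset (Fin n))) : MeasurableSet (histEvent n P k p) := by
  have : histEvent n P k p = ⋂ j, {ω | k ≤ j → j ≤ n → P j ω = p j} := by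
    ext ω; simp [histEvent, Set.mem_iInter]
  rw [this]
  refine MeasurableSet.iInter (fun j => ?_)
  by_cases h1 : k ≤ j
  · by_cases h2 : j ≤ n
    · simp only [h1, h2, forall_true_left]; exact hm j (p j)
    · have : {ω | k ≤ j → j ≤ n → P j ω = p j} = Set.univ := by
        ext ω; simp [h2]
      rw [this]; exact MeasurableSet.univ
  · have : {ω | k ≤ j → j ≤ n → P j ω = p j} = Set.univ := by
      ext ω; simp [h1]
    rw [this]; exact MeasurableSet.univ

lemma measurable_mem_singleton (hm : ∀ k p, MeasurableSet {ω | P k ω = p}) (i : Fin n) (j : ℕ) :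
    MeasurableSet {ω | ({i} : Finset (Fin n)) ∈ P j ω} := by
  have : {ω | ({i} : Finset (Fin n)) ∈ P j ω}
      = ⋃ (p : Finset (Finset (Fin n))) (_ : ({i} : Finset (Fin n)) ∈ p), {ω | P j ω = p} := by
    ext ω; simp
  rw [this]
  exact MeasurableSet.iUnion (fun p => MeasurableSet.iUnion (fun _ => hm j p))

lemma measurable_Aset (hm : ∀ k p, MeasurableSet {ω | P k ω = p}) (i : Fin n) (k : ℕ) :
    MeasurableSet (Aset n P i k) := by
  have : Aset n P i k = ⋂ j, {ω | k ≤ j → j ≤ n → ({i} : Finset (Fin n)) ∈ P j ω} := by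
    ext ω; simp [Aset, Set.mem_iInter]
  rw [this]
  refine MeasurableSet.iInter (fun j => ?_)
  by_cases h1 : k ≤ j
  · by_cases h2 : j ≤ n
    · simp only [h1, h2, forall_true_left]; exact measurable_mem_singleton hm i j
    · have : {ω | k ≤ j → j ≤ n → ({i} : Finset (Fin n)) ∈ P j ω} = Set.univ := by
        ext ω; simp [h2]
      rw [this]; exact MeasurableSet.univ
  · have : {ω | k ≤ j → j ≤ n → ({i} : Finset (Fin n)) ∈ P j ω} = Set.univ := by
      ext ω; simp [h1]
    rw [this]; exact MeasurableSet.univ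

lemma cover_V (k : ℕ) (hk : k ≤ n) (ω : Ω) :
    ∃ v ∈ V n k, ω ∈ histEvent n P k (tup n v) := by
  refine ⟨fun j : Fin (n+1) => if k ≤ (j:ℕ) then P (j:ℕ) ω else ∅, ?_, ?_⟩
  · simp only [V, Finset.mem_filter, Finset.mem_univ, true_and]
    intro j hj
    simp [Nat.not_le.2 hj]
  · intro j hj1 hj2
    rw [tup_eq _ hj2]
    simp [hj1]

lemma disjoint_V {k : ℕ} {v w : Fin (n+1) → Finset (Finset (Fin n))}
    (hv : v ∈ V n k) (hw : w ∈ V n k) (hvw : v ≠ w) :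
    Disjoint (histEvent n P k (tup n v)) (histEvent n P k (tup n w)) := by
  rw [Set.disjoint_left]
  intro ω h1 h2
  apply hvw
  funext j
  by_cases hj : (j:ℕ) < k
  · rw [(Finset.mem_filter.1 hv).2 j hj, (Finset.mem_filter.1 hw).2 j hj]
  · have hjk : k ≤ (j:ℕ) := Nat.not_lt.1 hj
    have hjn : (j:ℕ) ≤ n := Nat.lt_succ_iff.1 j.isLt
    have e1 := h1 (j:ℕ) hjk hjn
    have e2 := h2 (j:ℕ) hjk hjn
    rw [tup_eq _ hjn] at e1 e2
    simp only [Fin.eta] at e1 e2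
    rw [← e1, ← e2]

lemma decomp (μ : Measure Ω) [IsProbabilityMeasure μ]
    (hm : ∀ k p, MeasurableSet {ω | P k ω = p}) {k : ℕ} (hk : k ≤ n)
    {s : Set Ω} (hs : MeasurableSet s) :
    (μ s).toReal = ∑ v ∈ V n k, (μ (histEvent n P k (tup n v) ∩ s)).toReal := by
  have hcov : s = ⋃ v ∈ V n k, (histEvent n P k (tup n v) ∩ s) := by
    ext ω
    simp only [Set.mem_iUnion]
    constructor
    · intro hω
      obtain ⟨v, hv, hvω⟩ := cover_V k hk ω
      exact ⟨v, hv, hvω, hω⟩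
    · rintro ⟨v, hv, _, hω⟩; exact hω
  have := measure_biUnion_finset (μ := μ)
    (s := V n k) (f := fun v => histEvent n P k (tup n v) ∩ s)
    (fun v hv w hw hvw => (disjoint_V hv hw hvw).mono Set.inter_subset_left Set.inter_subset_left)
    (fun v _ => (measurable_histEvent hm k _).inter hs)
  calc (μ s).toReal = (μ (⋃ v ∈ V n k, histEvent n P k (tup n v) ∩ s)).toReal := by
        rw [← hcov]
    _ = _ := by rw [this, ENNReal.toReal_sum (fun v _ => measure_ne_top μ _)]

lemma good_singletons : Good n n (Finset.univ.image (fun i : Fin n => ({i} : Finset (Fin n)))) := by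
  refine ⟨?_, ?_, ?_⟩
  · rw [Finset.card_image_of_injective _ (fun a b h => by
      simpa using h), Finset.card_univ, Fintype.card_fin]
  · intro b hb
    obtain ⟨i, _, rfl⟩ := Finset.mem_image.1 hb
    exact ⟨i, Finset.mem_singleton_self i⟩
  · intro a ha b hb hab
    obtain ⟨i, _, rfl⟩ := Finset.mem_image.1 ha
    obtain ⟨j, _, rfl⟩ := Finset.mem_image.1 hb
    simp only [Finset.disjoint_singleton_left, Finset.mem_singleton]
    intro h; exact hab (by rw [h])

lemma toReal_zero_of {μ : Measure Ω} [IsProbabilityMeasure μ] {s : Set Ω}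
    (h : (μ s).toReal = 0) : μ s = 0 := by
  rcases (ENNReal.toReal_eq_zero_iff _).1 h with h | h
  · exact h
  · exact absurd h (measure_ne_top μ s)

lemma good_as (μ : Measure Ω) [IsProbabilityMeasure μ] (hP : IsKingmanPartition n μ P) :
    ∀ m k, k = n - m → 1 ≤ k → μ {ω | ¬ Good n k (P k ω)} = 0 := by
  obtain ⟨hm, hinit, hstep⟩ := hP
  intro m
  induction m with
  | zero =>
    intro k hk hk1
    have hkn : n = k := by omega
    have h0 : μ {ω | ¬ P n ω = Finset.univ.image (fun i : Fin n => {i})} = 0 := by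
      simpa [ae_iff] using hinit
    rw [← hkn]
    refine measure_mono_null ?_ h0
    intro ω hω
    simp only [Set.mem_setOf_eq] at hω ⊢
    intro hmem
    exact hω (by rw [hmem]; exact good_singletons)
  | succ m ih =>
    intro k hk hk1
    set k' := n - m with hk'
    have hkk' : k = k' - 1 := by omega
    have hk'2 : 2 ≤ k' := by omega
    have hk'n : k' ≤ n := by omega
    have ihm : μ {ω | ¬ Good n k' (P k' ω)} = 0 := ih k' rfl (by omega)
    have key : ∀ p' : Finset (Finset (Fin n)), ¬ Good n k p' → μ {ω | P k ω = p'} = 0 := by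
      intro p' hbad
      apply toReal_zero_of
      rw [decomp μ hm hk'n (hm k p')]
      refine Finset.sum_eq_zero (fun v hv => ?_)
      have e : histEvent n P k' (tup n v)
          = {ω | ∀ j, k' ≤ j → j ≤ n → P j ω = tup n v j} := rfl
      by_cases hgood : Good n k' (tup n v k')
      · have hstep' := hstep k' hk'2 hk'n (tup n v) p'
        rw [← hkk'] at hstep'
        have hbad' : ¬ Good n (k' - 1) p' := by rw [← hkk']; exact hbad
        rw [e, hstep', mergeProb_zero hk'2 hgood hbad', mul_zero]
      · have hsub : histEvent n P k' (tup n v) ⊆ {ω | ¬ Good n k' (P k' ω)} := by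
          intro ω hω
          have := hω k' le_rfl hk'n
          simp only [Set.mem_setOf_eq, this]
          exact hgood
        have h0 : μ (histEvent n P k' (tup n v) ∩ {ω | P k ω = p'}) = 0 :=
          measure_mono_null (Set.inter_subset_left.trans hsub) ihm
        rw [h0, ENNReal.toReal_zero]
    have : {ω | ¬ Good n k (P k ω)} =
        ⋃ (p' : Finset (Finset (Fin n))) (_ : ¬ Good n k p'), {ω | P k ω = p'} := by
      ext ω; simp
    rw [this]
    refine measure_iUnion_null (fun p' => ?_)
    by_cases h : Good n k p'
    · simp [h]
    · simp only [h, not_false_iff, Set.iUnion_true]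
      exact key p' h

lemma Aset_rec (μ : Measure Ω) [IsProbabilityMeasure μ] (hP : IsKingmanPartition n μ P)
    (i : Fin n) {k : ℕ} (hk2 : 2 ≤ k) (hkn : k ≤ n) :
    (μ (Aset n P i (k-1))).toReal = (((k:ℝ)) - 2)/(k:ℝ) * (μ (Aset n P i k)).toReal := by
  have hgood_as := good_as μ hP (n - k) k (by omega) (by omega)
  obtain ⟨hm, hinit, hstep⟩ := hP
  set B : Set Ω := {ω | ({i} : Finset (Fin n)) ∈ P (k-1) ω} with hB
  have hsplit : Aset n P i (k-1) = Aset n P i k ∩ B := by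
    ext ω
    simp only [Aset, Set.mem_inter_iff, Set.mem_setOf_eq, hB]
    constructor
    · intro h
      exact ⟨fun j hj1 hj2 => h j (by omega) hj2, h (k-1) le_rfl (by omega)⟩
    · rintro ⟨h1, h2⟩ j hj1 hj2
      rcases eq_or_lt_of_le hj1 with rfl | hlt
      · exact h2
      · exact h1 j (by omega) hj2
  have hMB : MeasurableSet B := measurable_mem_singleton hm i (k-1)
  have hMA : MeasurableSet (Aset n P i k) := measurable_Aset hm i k
  rw [hsplit, decomp μ hm hkn (hMA.inter hMB), decomp μ hm hkn hMA, Finset.mul_sum]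
  refine Finset.sum_congr rfl (fun v hv => ?_)
  set E := histEvent n P k (tup n v) with hE
  have eE : E = {ω | ∀ j, k ≤ j → j ≤ n → P j ω = tup n v j} := rfl
  by_cases hc : ∀ j, k ≤ j → j ≤ n → ({i} : Finset (Fin n)) ∈ tup n v j
  · have hEA : E ∩ Aset n P i k = E := by
      refine Set.inter_eq_self_of_subset_left ?_
      intro ω hω j hj1 hj2
      rw [hω j hj1 hj2]
      exact hc j hj1 hj2
    have h1 : E ∩ (Aset n P i k ∩ B) = E ∩ B := by rw [← Set.inter_assoc, hEA]
    rw [h1, hEA]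
    by_cases hgood : Good n k (tup n v k)
    · have hcover : E ∩ B = ⋃ p' ∈ Finset.univ.filter
          (fun p' : Finset (Finset (Fin n)) => ({i} : Finset (Fin n)) ∈ p'),
          (E ∩ {ω | P (k-1) ω = p'}) := by
        ext ω
        simp only [Set.mem_iUnion, Finset.mem_filter, Finset.mem_univ, true_and,
          Set.mem_inter_iff, Set.mem_setOf_eq, hB]
        constructor
        · rintro ⟨hh1, hh2⟩; exact ⟨P (k-1) ω, hh2, hh1, rfl⟩
        · rintro ⟨p', hp', hh1, hh2⟩; exact ⟨hh1, hh2 ▸ hp'⟩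
      have hdisj : (↑(Finset.univ.filter
          (fun p' : Finset (Finset (Fin n)) => ({i} : Finset (Fin n)) ∈ p')) :
            Set (Finset (Finset (Fin n)))).PairwiseDisjoint
          (fun p' => E ∩ {ω | P (k-1) ω = p'}) := by
        intro a _ b _ hab
        apply Set.disjoint_left.2
        rintro ω ⟨_, ha⟩ ⟨_, hb⟩
        exact hab (ha ▸ hb ▸ rfl)
      rw [hcover, measure_biUnion_finset hdisj
        (fun p' _ => (measurable_histEvent hm k _).inter (hm (k-1) p')),
        ENNReal.toReal_sum (fun p' _ => measure_ne_top μ _)]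
      have hterm : ∀ p' ∈ Finset.univ.filter
          (fun p' : Finset (Finset (Fin n)) => ({i} : Finset (Fin n)) ∈ p'),
          (μ (E ∩ {ω | P (k-1) ω = p'})).toReal
            = (μ E).toReal * mergeProb n k (tup n v k) p' := by
        intro p' _
        rw [eE]
        exact hstep k hk2 hkn (tup n v) p'
      rw [Finset.sum_congr rfl hterm, ← Finset.mul_sum,
        sum_mergeProb_keep hk2 hgood (hc k le_rfl hkn)]
      ring
    · have hnull : μ E = 0 := by
        refine measure_mono_null ?_ hgood_as
        intro ω hω
        have := hω k le_rfl hkn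
        simp only [Set.mem_setOf_eq, this]
        exact hgood
      rw [measure_mono_null Set.inter_subset_left hnull, hnull]
      simp
  · push_neg at hc
    obtain ⟨j, hj1, hj2, hj3⟩ := hc
    have hempty : E ∩ Aset n P i k = ∅ := by
      ext ω
      simp only [Set.mem_inter_iff, Set.mem_empty_iff_false, iff_false, not_and]
      intro hωE hωA
      exact hj3 (hωE j hj1 hj2 ▸ hωA j hj1 hj2)
    have h2 : E ∩ (Aset n P i k ∩ B) = ∅ := by
      rw [← Set.inter_assoc, hempty, Set.empty_inter]
    rw [h2, hempty]
    simp

lemma Aset_base (μ : Measure Ω) [IsProbabilityMeasure μ] (hP : IsKingmanPartition n μ P)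
    (i : Fin n) : (μ (Aset n P i n)).toReal = 1 := by
  obtain ⟨hm, hinit, hstep⟩ := hP
  have hsub : {ω | P n ω = Finset.univ.image (fun i : Fin n => {i})} ⊆ Aset n P i n := by
    intro ω hω j hj1 hj2
    have hj : j = n := le_antisymm hj2 hj1
    subst hj
    rw [Set.mem_setOf_eq] at hω
    rw [hω]
    exact Finset.mem_image.2 ⟨i, Finset.mem_univ i, rfl⟩
  have h0 : μ (Aset n P i n)ᶜ = 0 := by
    refine measure_mono_null ?_ (by simpa [ae_iff] using hinit)
    intro ω hω
    simp only [Set.mem_setOf_eq]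
    intro heq
    exact hω (hsub heq)
  have := measure_add_measure_compl (μ := μ) (measurable_Aset hm i n)
  rw [h0, add_zero, measure_univ] at this
  rw [this, ENNReal.toReal_one]

lemma Aset_val (μ : Measure Ω) [IsProbabilityMeasure μ] (hP : IsKingmanPartition n μ P)
    (i : Fin n) (hn : 2 ≤ n) :
    ∀ m, m ≤ n - 1 → (μ (Aset n P i (n - m))).toReal
      = ((n-m : ℕ):ℝ) * (((n-m : ℕ):ℝ) - 1) / ((n:ℝ) * ((n:ℝ) - 1)) := by
  have hn0 : (n:ℝ) ≠ 0 := by positivity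
  have hn1 : (n:ℝ) - 1 ≠ 0 := by
    have : (2:ℝ) ≤ (n:ℝ) := by exact_mod_cast hn
    linarith
  intro m
  induction m with
  | zero =>
    intro _
    simp only [Nat.sub_zero]
    rw [Aset_base μ hP i]
    field_simp
  | succ m ih =>
    intro hm1
    have hk2 : 2 ≤ n - m := by omega
    have hkn : n - m ≤ n := by omega
    have e : n - (m+1) = (n - m) - 1 := by omega
    rw [e, Aset_rec μ hP i hk2 hkn, ih (by omega)]
    set k := n - m with hkdef
    have hc1 : ((k - 1 : ℕ):ℝ) = (k:ℝ) - 1 := by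
      have h1 : 1 ≤ k := by omega
      push_cast [h1]; ring
    rw [hc1]
    have hk0 : (k:ℝ) ≠ 0 := by positivity
    field_simp
    ring

lemma Aset_val' (μ : Measure Ω) [IsProbabilityMeasure μ] (hP : IsKingmanPartition n μ P)
    (i : Fin n) (hn : 2 ≤ n) {k : ℕ} (h1 : 1 ≤ k) (hkn : k ≤ n) :
    (μ (Aset n P i k)).toReal = (k:ℝ) * ((k:ℝ) - 1) / ((n:ℝ) * ((n:ℝ) - 1)) := by
  have := Aset_val μ hP i hn (n - k) (by omega)
  rw [show n - (n - k) = k by omega] at this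
  exact this

lemma rho_lt_iff {k : ℕ} (h1 : 1 ≤ k) (i : Fin n) (ω : Ω) :
    rho n P i ω < k ↔ ω ∈ Aset n P i k := by
  unfold rho
  constructor
  · intro h j hj1 hj2
    by_contra hmem
    have hj : j ∈ {k' | 1 ≤ k' ∧ k' ≤ n ∧ ({i} : Finset (Fin n)) ∉ P k' ω} :=
      ⟨by omega, hj2, hmem⟩
    have hbdd : BddAbove {k' | 1 ≤ k' ∧ k' ≤ n ∧ ({i} : Finset (Fin n)) ∉ P k' ω} :=
      ⟨n, fun a ha => ha.2.1⟩
    have := le_csSup hbdd hj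
    omega
  · intro h
    rcases Set.eq_empty_or_nonempty
      {k' | 1 ≤ k' ∧ k' ≤ n ∧ ({i} : Finset (Fin n)) ∉ P k' ω} with he | hne
    · rw [he]
      simpa using by omega
    · have hle : sSup {k' | 1 ≤ k' ∧ k' ≤ n ∧ ({i} : Finset (Fin n)) ∉ P k' ω} ≤ k - 1 := by
        refine csSup_le hne (fun j hj => ?_)
        obtain ⟨hj1, hj2, hj3⟩ := hj
        by_contra hc
        have hkj : k ≤ j := by omega
        exact hj3 (h j hkj hj2)
      omega

end KingmanAux

/-- With `ρ = ρ(1)` and `R'_n = 2(1/ρ − 1/n)`: for every `x > 0`,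
`P(n R'_n > x) = P(ρ < 2n/(x+2))`, and this probability converges to `4/(x+2)²`
as `n → ∞`. -/
theorem Rn_prime_limit {Ω : ℕ → Type*} [∀ n, MeasurableSpace (Ω n)]
    (μ : ∀ n, Measure (Ω n)) [∀ n, IsProbabilityMeasure (μ n)]
    (P : ∀ n, ℕ → Ω n → Finset (Finset (Fin n)))
    (hP : ∀ n, IsKingmanPartition n (μ n) (P n))
    (x : ℝ) (hx : 0 < x) :
    (∀ n, ∀ hn : 2 ≤ n,
      μ n {ω | (n : ℝ) * (2 * (1 / (rho n (P n) (⟨0, by omega⟩ : Fin n) ω : ℝ)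
              - 1 / (n : ℝ))) > x}
        = μ n {ω | (rho n (P n) (⟨0, by omega⟩ : Fin n) ω : ℝ) < 2 * (n : ℝ) / (x + 2)}) ∧
    ∀ f : ℕ → ℝ,
      (∀ n, ∀ hn : 2 ≤ n,
        f n = (μ n {ω | (n : ℝ) * (2 * (1 / (rho n (P n) (⟨0, by omega⟩ : Fin n) ω : ℝ)
                - 1 / (n : ℝ))) > x}).toReal) →
      Filter.Tendsto f Filter.atTop (nhds (4 / (x + 2) ^ 2)) := by
  have hx2 : (0:ℝ) < x + 2 := by linarith
  have key : ∀ n, ∀ hn : 2 ≤ n,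
      (μ n {ω | (n : ℝ) * (2 * (1 / (rho n (P n) (⟨0, by omega⟩ : Fin n) ω : ℝ)
              - 1 / (n : ℝ))) > x}
        = μ n {ω | (rho n (P n) (⟨0, by omega⟩ : Fin n) ω : ℝ) < 2 * (n : ℝ) / (x + 2)}) ∧
      (μ n {ω | (rho n (P n) (⟨0, by omega⟩ : Fin n) ω : ℝ) < 2 * (n : ℝ) / (x + 2)}).toReal
        = ((⌈2 * (n:ℝ) / (x+2)⌉₊ : ℝ) * ((⌈2 * (n:ℝ) / (x+2)⌉₊ : ℝ) - 1))
            / ((n:ℝ) * ((n:ℝ) - 1)) := by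
    intro n hn
    set i : Fin n := ⟨0, by omega⟩ with hi
    have hn0 : (0:ℝ) < (n:ℝ) := by positivity
    have htpos : (0:ℝ) < 2 * (n:ℝ) / (x+2) := by positivity
    set K := ⌈2 * (n:ℝ) / (x+2)⌉₊ with hK
    have hK1 : 1 ≤ K := Nat.ceil_pos.2 htpos
    have hKn : K ≤ n := by
      rw [hK, Nat.ceil_le, div_le_iff₀ hx2]
      nlinarith
    have hS2 : {ω | (rho n (P n) i ω : ℝ) < 2 * (n:ℝ) / (x+2)}
        = KingmanAux.Aset n (P n) i K := by
      ext ω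
      rw [Set.mem_setOf_eq, ← Nat.lt_ceil, ← hK]
      exact KingmanAux.rho_lt_iff hK1 i ω
    have hA1 : μ n (KingmanAux.Aset n (P n) i 1) = 0 := by
      apply KingmanAux.toReal_zero_of
      rw [KingmanAux.Aset_val' (μ n) (hP n) i hn le_rfl (by omega)]
      norm_num
    have hnull : μ n {ω | rho n (P n) i ω = 0} = 0 := by
      refine measure_mono_null ?_ hA1
      intro ω hω
      exact (KingmanAux.rho_lt_iff le_rfl i ω).1 (by rw [Set.mem_setOf_eq] at hω; omega)
    have hae : ∀ᵐ ω ∂ (μ n), rho n (P n) i ω ≠ 0 := by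
      rw [ae_iff]
      simpa using hnull
    constructor
    · apply measure_congr
      rw [Filter.eventuallyEq_set]
      filter_upwards [hae] with ω hω
      have hr1 : (1:ℝ) ≤ (rho n (P n) i ω : ℝ) := by
        have : 1 ≤ rho n (P n) i ω := by omega
        exact_mod_cast this
      have hr0 : (0:ℝ) < (rho n (P n) i ω : ℝ) := by linarith
      set r : ℝ := (rho n (P n) i ω : ℝ)
      have e : (n:ℝ) * (2 * (1 / r - 1 / (n:ℝ))) = 2 * (n:ℝ) / r - 2 := by
        field_simp
      rw [gt_iff_lt, e]
      constructor
      · intro h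
        rw [lt_div_iff₀ hx2]
        rw [lt_sub_iff_add_lt, lt_div_iff₀ hr0] at h
        nlinarith
      · intro h
        rw [lt_div_iff₀ hx2] at h
        rw [lt_sub_iff_add_lt, lt_div_iff₀ hr0]
        nlinarith
    · rw [hS2, KingmanAux.Aset_val' (μ n) (hP n) i hn hK1 hKn]
  refine ⟨fun n hn => (key n hn).1, ?_⟩
  intro f hf
  set c : ℝ := 2 / (x+2) with hc
  set K : ℕ → ℕ := fun n => ⌈2 * (n:ℝ) / (x+2)⌉₊ with hKdef
  have hfval : ∀ n, 2 ≤ n → f n = ((K n : ℝ)/(n:ℝ)) * (((K n : ℝ) - 1)/((n:ℝ) - 1)) := by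
    intro n hn
    have hn0 : (n:ℝ) ≠ 0 := by positivity
    have hn1 : (n:ℝ) - 1 ≠ 0 := by
      have : (2:ℝ) ≤ (n:ℝ) := by exact_mod_cast hn
      linarith
    rw [hf n hn, (key n hn).1, (key n hn).2]
    field_simp
    rfl
  have hKlb : ∀ n : ℕ, 2 * (n:ℝ) / (x+2) ≤ K n := fun n => Nat.le_ceil _
  have hKub : ∀ n : ℕ, (K n : ℝ) < 2 * (n:ℝ) / (x+2) + 1 := fun n =>
    Nat.ceil_lt_add_one (by positivity)
  have hconst : Filter.Tendsto (fun _ : ℕ => c) Filter.atTop (nhds c) := tendsto_const_nhds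
  have hh1 : Filter.Tendsto (fun n : ℕ => c + 1/(n:ℝ)) Filter.atTop (nhds c) := by
    have h := hconst.add tendsto_one_div_atTop_nhds_zero_nat
    rw [add_zero] at h
    exact h
  have h1 : Filter.Tendsto (fun n : ℕ => (K n : ℝ)/(n:ℝ)) Filter.atTop (nhds c) := by
    apply tendsto_of_tendsto_of_tendsto_of_le_of_le' hconst hh1
    · filter_upwards [Filter.eventually_ge_atTop 1] with n hn
      have hn0 : (0:ℝ) < (n:ℝ) := by positivity
      rw [le_div_iff₀ hn0]
      calc c * (n:ℝ) = 2 * (n:ℝ) / (x+2) := by rw [hc]; ring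
        _ ≤ K n := hKlb n
    · filter_upwards [Filter.eventually_ge_atTop 1] with n hn
      have hn0 : (0:ℝ) < (n:ℝ) := by positivity
      rw [div_le_iff₀ hn0]
      have he : (c + 1/(n:ℝ)) * (n:ℝ) = 2 * (n:ℝ) / (x+2) + 1 := by
        rw [hc]; field_simp
      rw [he]
      exact (hKub n).le
  have hden : Filter.Tendsto (fun n : ℕ => (n:ℝ) - 1) Filter.atTop Filter.atTop := by
    have h := Filter.tendsto_atTop_add_const_right Filter.atTop (-1 : ℝ)
      (tendsto_natCast_atTop_atTop (R := ℝ))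
    exact h.congr (fun n => by ring)
  have hinv : Filter.Tendsto (fun n : ℕ => ((n:ℝ) - 1)⁻¹) Filter.atTop (nhds 0) :=
    hden.inv_tendsto_atTop
  have h2 : Filter.Tendsto (fun n : ℕ => ((K n : ℝ) - 1)/((n:ℝ) - 1))
      Filter.atTop (nhds c) := by
    have c1 : Filter.Tendsto (fun _ : ℕ => c - 1) Filter.atTop (nhds (c - 1)) :=
      tendsto_const_nhds
    have hg2 : Filter.Tendsto (fun n : ℕ => c + (c - 1) * ((n:ℝ) - 1)⁻¹)
        Filter.atTop (nhds c) := by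
      have h := hconst.add (c1.mul hinv)
      rw [mul_zero, add_zero] at h
      exact h
    have hh2 : Filter.Tendsto (fun n : ℕ => c + c * ((n:ℝ) - 1)⁻¹)
        Filter.atTop (nhds c) := by
      have h := hconst.add (hconst.mul hinv)
      rw [mul_zero, add_zero] at h
      exact h
    apply tendsto_of_tendsto_of_tendsto_of_le_of_le' hg2 hh2
    · filter_upwards [Filter.eventually_ge_atTop 2] with n hn
      have hd : (0:ℝ) < (n:ℝ) - 1 := by
        have : (2:ℝ) ≤ (n:ℝ) := by exact_mod_cast hn
        linarith
      rw [le_div_iff₀ hd]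
      have he : (c + (c - 1) * ((n:ℝ) - 1)⁻¹) * ((n:ℝ) - 1)
          = 2 * (n:ℝ) / (x+2) - 1 := by
        rw [hc]; field_simp; ring
      rw [he]
      linarith [hKlb n]
    · filter_upwards [Filter.eventually_ge_atTop 2] with n hn
      have hd : (0:ℝ) < (n:ℝ) - 1 := by
        have : (2:ℝ) ≤ (n:ℝ) := by exact_mod_cast hn
        linarith
      rw [div_le_iff₀ hd]
      have he : (c + c * ((n:ℝ) - 1)⁻¹) * ((n:ℝ) - 1) = 2 * (n:ℝ) / (x+2) := by
        rw [hc]; field_simp; ring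
      rw [he]
      linarith [hKub n]
  have hprod := h1.mul h2
  have heq : (fun n : ℕ => ((K n : ℝ)/(n:ℝ)) * (((K n : ℝ) - 1)/((n:ℝ) - 1)))
      =ᶠ[Filter.atTop] f := by
    filter_upwards [Filter.eventually_ge_atTop 2] with n hn
    exact (hfval n hn).symm
  have hcc : c * c = 4 / (x + 2) ^ 2 := by
    rw [hc]; field_simp; ring
  rw [← hcc]
  exact hprod.congr' heq
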